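/- Let X, Y ∈ ℝ^{L×M} with L ≥ M, and suppose the M-th largest singular value of X satisfies σ_M(X) > ‖Y‖ (spectral norm). Then both XᵀX and (X+Y)ᵀ(X+Y) are invertible and ‖Π_o(X+Y) − Π_o(X)‖_F ≤ (1+√2) · ‖Y‖_F / (σ_M(X) − ‖Y‖), where Π_o(Z) = Z(ZᵀZ)^{−1/2}. -/

import Mathlib

open Matrix BigOperators

theorem Matrix.isHermitian_transpose_mul_self {m n : Type*} [Fintype m] (A : Matrix m n ℝ) :
    (Aᵀ * A).IsHermitian := by
  simpa [Matrix.conjTranspose_eq_transpose_of_trivial] using Matrix.isHermitian_conjTranspose_mul_self A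

noncomputable def Matrix.PosSemidef.sqrt {n : Type*} [Fintype n] [DecidableEq n]
    {A : Matrix n n ℝ} (hA : A.PosSemidef) : Matrix n n ℝ :=
  hA.1.eigenvectorUnitary.1 * diagonal ((↑) ∘ (√·) ∘ hA.1.eigenvalues) *
    (star hA.1.eigenvectorUnitary : Matrix n n ℝ)

/-- Frobenius norm of a real matrix. -/
noncomputable def frobNorm {a b : ℕ} (X : Matrix (Fin a) (Fin b) ℝ) : ℝ :=
  Real.sqrt (∑ i, ∑ j, (X i j) ^ 2)

/-- Spectral (operator) norm of a real matrix. -/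
noncomputable def specNorm {a b : ℕ} (X : Matrix (Fin a) (Fin b) ℝ) : ℝ :=
  ‖LinearMap.toContinuousLinearMap (Matrix.toEuclideanLin X)‖

/-- `singVal X k`: the `k`-th largest singular value of `X` (1-indexed),
i.e. the `k`-th largest square root of an eigenvalue of `Xᴴ X`. -/
noncomputable def singVal {a b : ℕ} (X : Matrix (Fin a) (Fin b) ℝ) (k : ℕ) : ℝ :=
  ((((Finset.univ : Finset (Fin b)).val.map
      (fun i => Real.sqrt ((Matrix.isHermitian_transpose_mul_self X).eigenvalues i))).sort
      (· ≤ ·)).getD (b - k) 0)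

/-- The positive semidefinite square root of a positive semidefinite matrix
(junk value `0` otherwise). -/
noncomputable def matSqrt {d : ℕ} (A : Matrix (Fin d) (Fin d) ℝ) : Matrix (Fin d) (Fin d) ℝ :=
  open scoped Classical in
  if h : A.PosSemidef then h.sqrt else 0

/-- `Πₒ(X) = X (XᵀX)^{-1/2}`, the projection onto the nearest orthonormal-column matrix. -/
noncomputable def Pio {a b : ℕ} (X : Matrix (Fin a) (Fin b) ℝ) : Matrix (Fin a) (Fin b) ℝ :=
  X * (matSqrt (Xᵀ * X))⁻¹

/-!
Write `S = (XᵀX)^{1/2}` and `T = ((X+Y)ᵀ(X+Y))^{1/2}`. Since `σ_M(X) ‖v‖ ≤ ‖Xv‖`, the triangle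
inequality gives `(σ_M(X) - ‖Y‖) ‖v‖ ≤ ‖(X+Y)v‖`; moreover `‖Sv‖ = ‖Xv‖` and `‖Tv‖ = ‖(X+Y)v‖`.
Hence both Gram matrices and both square roots are invertible, `X S⁻¹` is an isometry and
`‖T⁻¹‖ ≤ 1 / (σ_M(X) - ‖Y‖)`. The identity `Πₒ(X+Y) - Πₒ(X) = (Y + X S⁻¹ (S - T)) T⁻¹` then
reduces the bound to `‖|A| - |B|‖_F ≤ √2 ‖A - B‖_F` for `|A| = (AᵀA)^{1/2}`.

For the latter, take eigenbases `U`, `V` of `|A|`, `|B|` with eigenvalues `p`, `q`, and put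
`K = (AU)ᵀ(BV)`, `Γ = UᵀV`. Expanding both Frobenius norms, the inequality becomes
`4 ∑ K_ij Γ_ij ≤ ‖A‖_F² + ‖B‖_F² + 2 ∑ p_i q_j Γ_ij²`. Termwise AM–GM bounds `4 K_ij Γ_ij` by
`2 p_i q_j Γ_ij² + (K_ij / p_i)² + (K_ij / q_j)²`, and since the columns of `AU` (resp. `BV`) are
orthogonal with norms `p_i` (resp. `q_j`), Bessel's inequality gives
`∑ (K_ij / p_i)² ≤ ‖B‖_F²` and `∑ (K_ij / q_j)² ≤ ‖A‖_F²`.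
-/

section Frobenius
open scoped Matrix.Norms.Frobenius

variable {m n : ℕ}

lemma frobNorm_eq_norm (A : Matrix (Fin m) (Fin n) ℝ) : frobNorm A = ‖A‖ := by
  rw [frobenius_norm_def, frobNorm, Real.sqrt_eq_rpow]
  simp only [Real.norm_eq_abs, Real.rpow_two, sq_abs]

lemma frobNorm_nonneg (A : Matrix (Fin m) (Fin n) ℝ) : 0 ≤ frobNorm A :=
  Real.sqrt_nonneg _

lemma frobNorm_add_le (A B : Matrix (Fin m) (Fin n) ℝ) :
    frobNorm (A + B) ≤ frobNorm A + frobNorm B := by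
  simpa only [frobNorm_eq_norm] using norm_add_le A B

lemma frobNorm_neg (A : Matrix (Fin m) (Fin n) ℝ) : frobNorm (-A) = frobNorm A := by
  simp only [frobNorm_eq_norm, norm_neg]

lemma frobNorm_transpose (A : Matrix (Fin m) (Fin n) ℝ) : frobNorm Aᵀ = frobNorm A := by
  simp only [frobNorm_eq_norm, frobenius_norm_transpose]

lemma frobNorm_sq_eq_sum (A : Matrix (Fin m) (Fin n) ℝ) :
    frobNorm A ^ 2 = ∑ i, ∑ j, A i j ^ 2 :=
  Real.sq_sqrt (by positivity)

lemma frobNorm_sq (A : Matrix (Fin m) (Fin n) ℝ) : frobNorm A ^ 2 = trace (Aᵀ * A) := by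
  rw [frobNorm_sq_eq_sum, Finset.sum_comm]
  simp [trace, mul_apply, sq]

lemma frobNorm_sub_sq (A B : Matrix (Fin m) (Fin n) ℝ) :
    frobNorm (A - B) ^ 2 = frobNorm A ^ 2 + frobNorm B ^ 2 - 2 * trace (Aᵀ * B) := by
  have hBA : trace (Bᵀ * A) = trace (Aᵀ * B) := by
    rw [← trace_transpose, transpose_mul, transpose_transpose]
  simp only [frobNorm_sq, transpose_sub, Matrix.sub_mul, Matrix.mul_sub, trace_sub, hBA]
  ring

lemma frobNorm_mul_of_mul_transpose_eq_one (B : Matrix (Fin m) (Fin n) ℝ)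
    {V : Matrix (Fin n) (Fin n) ℝ} (hV : V * Vᵀ = 1) : frobNorm (B * V) = frobNorm B := by
  refine (sq_eq_sq₀ (frobNorm_nonneg _) (frobNorm_nonneg _)).mp ?_
  rw [frobNorm_sq, frobNorm_sq, transpose_mul, Matrix.mul_assoc, trace_mul_comm]
  simp only [Matrix.mul_assoc, hV, Matrix.mul_one]

end Frobenius

section Mixed
open scoped Matrix.Norms.L2Operator

variable {l m n : ℕ}

lemma specNorm_eq_norm (A : Matrix (Fin m) (Fin n) ℝ) : specNorm A = ‖A‖ := rfl

lemma specNorm_nonneg (A : Matrix (Fin m) (Fin n) ℝ) : 0 ≤ specNorm A := norm_nonneg _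

lemma specNorm_transpose (A : Matrix (Fin m) (Fin n) ℝ) : specNorm Aᵀ = specNorm A := by
  simpa only [specNorm_eq_norm, conjTranspose_eq_transpose_of_trivial]
    using l2_opNorm_conjTranspose A

lemma frobNorm_sq_eq_sum_col (A : Matrix (Fin m) (Fin n) ℝ) :
    frobNorm A ^ 2 = ∑ j, ‖WithLp.toLp 2 (fun i => A i j)‖ ^ 2 := by
  rw [frobNorm, Real.sq_sqrt (by positivity), Finset.sum_comm]
  simp only [EuclideanSpace.real_norm_sq_eq]

lemma frobNorm_mul_le_specNorm_mul (A : Matrix (Fin l) (Fin m) ℝ)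
    (B : Matrix (Fin m) (Fin n) ℝ) :
    frobNorm (A * B) ≤ specNorm A * frobNorm B := by
  refine le_of_sq_le_sq ?_ (mul_nonneg (specNorm_nonneg A) (frobNorm_nonneg B))
  rw [mul_pow, frobNorm_sq_eq_sum_col, frobNorm_sq_eq_sum_col, Finset.mul_sum]
  gcongr with j
  have hcol : (fun i => (A * B) i j) = A *ᵥ fun k => B k j := by
    ext i; simp [mul_apply, mulVec, dotProduct]
  rw [hcol, ← mul_pow]
  gcongr
  exact l2_opNorm_mulVec A (WithLp.toLp 2 fun k => B k j)

lemma frobNorm_mul_le_mul_specNorm (A : Matrix (Fin l) (Fin m) ℝ)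
    (B : Matrix (Fin m) (Fin n) ℝ) :
    frobNorm (A * B) ≤ frobNorm A * specNorm B := by
  rw [← frobNorm_transpose, transpose_mul, mul_comm, ← frobNorm_transpose A,
    ← specNorm_transpose]
  exact frobNorm_mul_le_specNorm_mul Bᵀ Aᵀ

end Mixed

section LowerBound
open scoped MatrixOrder

variable {l m n : ℕ}

lemma posSemidef_transpose_mul_self (A : Matrix (Fin m) (Fin n) ℝ) : (Aᵀ * A).PosSemidef := by
  simpa only [conjTranspose_eq_transpose_of_trivial] using posSemidef_conjTranspose_mul_self A

lemma toEuclideanLin_mul_apply (A : Matrix (Fin l) (Fin m) ℝ) (B : Matrix (Fin m) (Fin n) ℝ)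
    (v : EuclideanSpace ℝ (Fin n)) :
    toEuclideanLin (A * B) v = toEuclideanLin A (toEuclideanLin B v) := by
  simp only [toLpLin_apply, mulVec_mulVec]

lemma norm_toEuclideanLin_le (A : Matrix (Fin m) (Fin n) ℝ) (v : EuclideanSpace ℝ (Fin n)) :
    ‖toEuclideanLin A v‖ ≤ specNorm A * ‖v‖ :=
  (LinearMap.toContinuousLinearMap (toEuclideanLin A)).le_opNorm v

lemma norm_toEuclideanLin_sq (A : Matrix (Fin m) (Fin n) ℝ) (v : EuclideanSpace ℝ (Fin n)) :
    ‖toEuclideanLin A v‖ ^ 2 = v.ofLp ⬝ᵥ (Aᵀ * A) *ᵥ v.ofLp := by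
  rw [← real_inner_self_eq_norm_sq, EuclideanSpace.inner_eq_star_dotProduct, star_trivial,
    toLpLin_apply, ← mulVec_mulVec, dotProduct_mulVec v.ofLp, vecMul_transpose]

lemma norm_toEuclideanLin_eq_of_mul_self_eq {A : Matrix (Fin m) (Fin n) ℝ}
    {S : Matrix (Fin n) (Fin n) ℝ} (hS : Sᵀ = S) (hSA : S * S = Aᵀ * A)
    (v : EuclideanSpace ℝ (Fin n)) :
    ‖toEuclideanLin S v‖ = ‖toEuclideanLin A v‖ := by
  refine (sq_eq_sq₀ (norm_nonneg _) (norm_nonneg _)).mp ?_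
  rw [norm_toEuclideanLin_sq, norm_toEuclideanLin_sq, hS, hSA]

lemma mul_norm_le_norm_toEuclideanLin {A : Matrix (Fin m) (Fin n) ℝ} {c : ℝ} (hc : 0 ≤ c)
    (h : ∀ i, c ≤ √((isHermitian_transpose_mul_self A).eigenvalues i))
    (v : EuclideanSpace ℝ (Fin n)) :
    c * ‖v‖ ≤ ‖toEuclideanLin A v‖ := by
  set hH := isHermitian_transpose_mul_self A
  have hle : algebraMap ℝ _ (c ^ 2) ≤ Aᵀ * A := by
    rw [algebraMap_le_iff_le_spectrum (a := Aᵀ * A) hH.isSelfAdjoint,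
      hH.spectrum_real_eq_range_eigenvalues]
    rintro _ ⟨i, rfl⟩
    exact (Real.le_sqrt hc ((posSemidef_transpose_mul_self A).eigenvalues_nonneg i)).mp (h i)
  have hquad := (le_iff.mp hle).dotProduct_mulVec_nonneg v.ofLp
  refine le_of_sq_le_sq ?_ (norm_nonneg _)
  rw [mul_pow, norm_toEuclideanLin_sq, ← real_inner_self_eq_norm_sq,
    EuclideanSpace.inner_eq_star_dotProduct]
  simpa [sub_mulVec, dotProduct_sub, Algebra.algebraMap_eq_smul_one, smul_mulVec] using hquad

end LowerBound

section Invertibility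

variable {m n : ℕ}

lemma injective_mulVec_of_mul_norm_le {A : Matrix (Fin m) (Fin n) ℝ} {c : ℝ} (hc : 0 < c)
    (h : ∀ v, c * ‖v‖ ≤ ‖toEuclideanLin A v‖) : Function.Injective A.mulVec := by
  intro x y hxy
  have hv := h (WithLp.toLp 2 (x - y))
  rw [toLpLin_apply, mulVec_sub, hxy, sub_self, WithLp.toLp_zero, norm_zero] at hv
  have hxy0 : ‖WithLp.toLp 2 (x - y)‖ = 0 :=
    le_antisymm (nonpos_of_mul_nonpos_right hv hc) (norm_nonneg _)
  simpa [sub_eq_zero] using hxy0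

lemma isUnit_transpose_mul_self_of_mul_norm_le {A : Matrix (Fin m) (Fin n) ℝ} {c : ℝ}
    (hc : 0 < c) (h : ∀ v, c * ‖v‖ ≤ ‖toEuclideanLin A v‖) : IsUnit (Aᵀ * A) := by
  simpa only [conjTranspose_eq_transpose_of_trivial]
    using (PosDef.conjTranspose_mul_self A (injective_mulVec_of_mul_norm_le hc h)).isUnit

lemma isUnit_det_of_mul_norm_le {S : Matrix (Fin n) (Fin n) ℝ} {c : ℝ} (hc : 0 < c)
    (h : ∀ v, c * ‖v‖ ≤ ‖toEuclideanLin S v‖) : IsUnit S.det :=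
  (isUnit_iff_isUnit_det S).mp <|
    mulVec_injective_iff_isUnit.mp (injective_mulVec_of_mul_norm_le hc h)

lemma specNorm_inv_le_of_mul_norm_le {S : Matrix (Fin n) (Fin n) ℝ} {c : ℝ} (hc : 0 < c)
    (h : ∀ v, c * ‖v‖ ≤ ‖toEuclideanLin S v‖) : specNorm S⁻¹ ≤ c⁻¹ := by
  refine ContinuousLinearMap.opNorm_le_bound _ (inv_nonneg.mpr hc.le) fun v => ?_
  have hv := h (toEuclideanLin S⁻¹ v)
  rw [← toEuclideanLin_mul_apply, mul_nonsing_inv S (isUnit_det_of_mul_norm_le hc h),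
    toLpLin_one, LinearMap.id_apply] at hv
  exact (le_inv_mul_iff₀ hc).mpr hv

lemma specNorm_mul_inv_le_one {A : Matrix (Fin m) (Fin n) ℝ} {S : Matrix (Fin n) (Fin n) ℝ}
    (hS : Sᵀ = S) (hSA : S * S = Aᵀ * A) (hdet : IsUnit S.det) :
    specNorm (A * S⁻¹) ≤ 1 := by
  refine ContinuousLinearMap.opNorm_le_bound _ zero_le_one fun v => ?_
  have hv := norm_toEuclideanLin_eq_of_mul_self_eq hS hSA (toEuclideanLin S⁻¹ v)
  rw [← toEuclideanLin_mul_apply, mul_nonsing_inv S hdet, toLpLin_one, LinearMap.id_apply] at hv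
  simp only [LinearMap.coe_toContinuousLinearMap', toEuclideanLin_mul_apply, ← hv, one_mul,
    le_refl]

end Invertibility

section Sqrt

variable {n : Type*} [Fintype n] [DecidableEq n] {A : Matrix n n ℝ}

lemma Matrix.PosSemidef.sqrt_mul_self (hA : A.PosSemidef) : hA.sqrt * hA.sqrt = A := by
  have hU := Unitary.coe_star_mul_self hA.1.eigenvectorUnitary
  conv_rhs => rw [hA.1.spectral_theorem, Unitary.conjStarAlgAut_apply]
  simp only [Matrix.PosSemidef.sqrt, Matrix.mul_assoc]
  rw [← Matrix.mul_assoc (star _) _ _, hU, Matrix.one_mul, ← Matrix.mul_assoc (diagonal _),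
    diagonal_mul_diagonal]
  congr 3
  ext i
  simp [Real.mul_self_sqrt (hA.eigenvalues_nonneg i)]

lemma Matrix.PosSemidef.posSemidef_sqrt (hA : A.PosSemidef) : hA.sqrt.PosSemidef := by
  rw [Matrix.PosSemidef.sqrt, Matrix.star_eq_conjTranspose]
  refine (PosSemidef.diagonal fun i => ?_).mul_mul_conjTranspose_same _
  exact Real.sqrt_nonneg _

end Sqrt

section MatSqrt

variable {d : ℕ} {A : Matrix (Fin d) (Fin d) ℝ}

lemma Matrix.PosSemidef.posSemidef_matSqrt (hA : A.PosSemidef) : (matSqrt A).PosSemidef := by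
  rw [matSqrt, dif_pos hA]
  exact hA.posSemidef_sqrt

lemma Matrix.PosSemidef.matSqrt_mul_self (hA : A.PosSemidef) : matSqrt A * matSqrt A = A := by
  rw [matSqrt, dif_pos hA]
  exact hA.sqrt_mul_self

end MatSqrt

section Spectral

variable {n : Type*} [Fintype n] [DecidableEq n] {P : Matrix n n ℝ} (hP : P.IsHermitian)

local notation "U" => (hP.eigenvectorUnitary : Matrix n n ℝ)

lemma star_eq_transpose_eigenvectorUnitary : star U = Uᵀ :=
  conjTranspose_eq_transpose_of_trivial _

lemma transpose_eigenvectorUnitary_mul_self : Uᵀ * U = 1 := by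
  rw [← star_eq_transpose_eigenvectorUnitary, Unitary.coe_star_mul_self]

lemma eigenvectorUnitary_mul_transpose_self : U * Uᵀ = 1 := by
  rw [← star_eq_transpose_eigenvectorUnitary,
    Unitary.mul_star_self_of_mem hP.eigenvectorUnitary.2]

lemma eq_eigenvectorUnitary_mul_diagonal_mul_transpose :
    P = U * diagonal hP.eigenvalues * Uᵀ := by
  conv_lhs => rw [hP.spectral_theorem, Unitary.conjStarAlgAut_apply]
  rw [star_eq_transpose_eigenvectorUnitary]
  rfl

lemma mul_eigenvectorUnitary : P * U = U * diagonal hP.eigenvalues := by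
  calc P * U = U * diagonal hP.eigenvalues * Uᵀ * U := by
        rw [← eq_eigenvectorUnitary_mul_diagonal_mul_transpose]
    _ = _ := by rw [Matrix.mul_assoc _ Uᵀ, transpose_eigenvectorUnitary_mul_self, Matrix.mul_one]

lemma transpose_mul_self_mul_eigenvectorUnitary {m : Type*} [Fintype m] {A : Matrix m n ℝ}
    (hPA : P * P = Aᵀ * A) :
    (A * U)ᵀ * (A * U) = diagonal fun i => hP.eigenvalues i ^ 2 := by
  calc (A * U)ᵀ * (A * U) = Uᵀ * (P * (P * U)) := by
        rw [← Matrix.mul_assoc P, hPA, transpose_mul]; simp only [Matrix.mul_assoc]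
    _ = Uᵀ * U * (diagonal hP.eigenvalues * diagonal hP.eigenvalues) := by
        rw [mul_eigenvectorUnitary, ← Matrix.mul_assoc P, mul_eigenvectorUnitary]
        simp only [Matrix.mul_assoc]
    _ = _ := by
        rw [transpose_eigenvectorUnitary_mul_self, Matrix.one_mul, diagonal_mul_diagonal]
        simp only [sq]

end Spectral

lemma Matrix.trace_mul_transpose_eq_sum {m n R : Type*} [Fintype m] [Fintype n] [CommSemiring R]
    (M N : Matrix m n R) : trace (M * Nᵀ) = ∑ i, ∑ j, M i j * N i j := by
  simp [trace, mul_apply]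

lemma trace_transpose_mul_eq_sum_rotated {m n : Type*} [Fintype m] [Fintype n] [DecidableEq n]
    {A B : Matrix m n ℝ} {U V : Matrix n n ℝ} (hU : U * Uᵀ = 1) (hV : V * Vᵀ = 1) :
    trace (Aᵀ * B) = ∑ i, ∑ j, ((A * U)ᵀ * (B * V)) i j * (Uᵀ * V) i j := by
  simp only [← trace_mul_transpose_eq_sum, transpose_mul, transpose_transpose]
  calc trace (Aᵀ * B) = trace (Aᵀ * B * (U * Uᵀ)) := by rw [hU, Matrix.mul_one]
    _ = trace (Uᵀ * (Aᵀ * B * (V * Vᵀ)) * U) := by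
        rw [hV, Matrix.mul_one, ← Matrix.mul_assoc, trace_mul_comm]
        simp only [Matrix.mul_assoc]
    _ = trace (Uᵀ * Aᵀ * (B * V) * (Vᵀ * U)) := by simp only [Matrix.mul_assoc]

section TwoSpectral

variable {n : Type*} [Fintype n] [DecidableEq n] {P Q : Matrix n n ℝ}
  (hP : P.IsHermitian) (hQ : Q.IsHermitian)

local notation "U" => (hP.eigenvectorUnitary : Matrix n n ℝ)
local notation "V" => (hQ.eigenvectorUnitary : Matrix n n ℝ)

lemma trace_mul_eq_sum_eigenvalues :
    trace (P * Q) = ∑ i, ∑ j, hP.eigenvalues i * hQ.eigenvalues j * (Uᵀ * V) i j ^ 2 := by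
  calc trace (P * Q)
      = trace (U * diagonal hP.eigenvalues * Uᵀ * (V * diagonal hQ.eigenvalues * Vᵀ)) := by
        rw [← eq_eigenvectorUnitary_mul_diagonal_mul_transpose,
          ← eq_eigenvectorUnitary_mul_diagonal_mul_transpose]
    _ = trace (diagonal hP.eigenvalues * (Uᵀ * V) * diagonal hQ.eigenvalues * (Uᵀ * V)ᵀ) := by
        simp only [transpose_mul, transpose_transpose, Matrix.mul_assoc]
        rw [trace_mul_comm U]
        simp only [Matrix.mul_assoc]
    _ = _ := by
        rw [trace_mul_transpose_eq_sum]
        simp only [mul_diagonal, diagonal_mul, sq]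
        exact Finset.sum_congr rfl fun i _ => Finset.sum_congr rfl fun j _ => by ring

end TwoSpectral

section Bessel

variable {k m n : ℕ}

lemma transpose_mul_apply_eq_zero {a : Matrix (Fin m) (Fin n) ℝ} {d : Fin n → ℝ}
    (ha : aᵀ * a = diagonal d) {i : Fin n} (hi : d i = 0) (b : Matrix (Fin m) (Fin k) ℝ)
    (j : Fin k) : (aᵀ * b) i j = 0 := by
  have hcol : ∑ l, a l i ^ 2 = 0 := by
    simpa [mul_apply, sq, hi] using congr_fun (congr_fun ha i) i
  have hzero : ∀ l, a l i = 0 := fun l => pow_eq_zero_iff two_ne_zero |>.mp <|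
    (Finset.sum_eq_zero_iff_of_nonneg fun l _ => sq_nonneg (a l i)).mp hcol l (Finset.mem_univ l)
  simp [mul_apply, hzero]

lemma specNorm_mul_diagonal_inv_le_one {a : Matrix (Fin m) (Fin n) ℝ} {p : Fin n → ℝ}
    (ha : aᵀ * a = diagonal fun i => p i ^ 2) : specNorm (a * diagonal p⁻¹) ≤ 1 := by
  refine ContinuousLinearMap.opNorm_le_bound _ zero_le_one fun v => ?_
  refine le_of_sq_le_sq ?_ (by positivity)
  have hgram : (a * diagonal p⁻¹)ᵀ * (a * diagonal p⁻¹) =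
      diagonal fun i => (p i)⁻¹ ^ 2 * p i ^ 2 := by
    rw [transpose_mul, diagonal_transpose, Matrix.mul_assoc, ← Matrix.mul_assoc aᵀ, ha,
      diagonal_mul_diagonal, diagonal_mul_diagonal]
    congr 1; ext i; simp only [Pi.inv_apply]; ring
  rw [LinearMap.coe_toContinuousLinearMap', norm_toEuclideanLin_sq, hgram, one_mul,
    EuclideanSpace.real_norm_sq_eq]
  simp only [dotProduct, mulVec_diagonal]
  gcongr with i
  rw [← mul_assoc, mul_comm, ← mul_assoc, ← sq]
  refine mul_le_of_le_one_right (sq_nonneg _) ?_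
  rcases eq_or_ne (p i) 0 with h | h <;> simp [h]

lemma sum_sq_inv_mul_transpose_mul_le {a : Matrix (Fin m) (Fin n) ℝ} {p : Fin n → ℝ}
    (ha : aᵀ * a = diagonal fun i => p i ^ 2) (b : Matrix (Fin m) (Fin k) ℝ) :
    ∑ i, ∑ j, ((p i)⁻¹ * (aᵀ * b) i j) ^ 2 ≤ frobNorm b ^ 2 := by
  have hdiag : diagonal p⁻¹ * (aᵀ * b) = (a * diagonal p⁻¹)ᵀ * b := by
    rw [transpose_mul, diagonal_transpose, Matrix.mul_assoc]
  have hle : frobNorm (diagonal p⁻¹ * (aᵀ * b)) ≤ frobNorm b := by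
    rw [hdiag]
    refine (frobNorm_mul_le_specNorm_mul _ b).trans ?_
    rw [specNorm_transpose]
    exact mul_le_of_le_one_left (frobNorm_nonneg b) (specNorm_mul_diagonal_inv_le_one ha)
  simpa only [frobNorm_sq_eq_sum, diagonal_mul, Pi.inv_apply]
    using pow_le_pow_left₀ (frobNorm_nonneg _) hle 2

end Bessel

section ArakiYamagami

-- Since `0⁻¹ = 0`, the inverse terms vanish when `p = 0` or `q = 0`, so `k` must vanish too.
lemma four_mul_le_two_mul_add_sq_add_sq {p q k g : ℝ} (hp : 0 ≤ p) (hq : 0 ≤ q)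
    (hkp : p = 0 → k = 0) (hkq : q = 0 → k = 0) :
    4 * (k * g) ≤ 2 * (p * q * g ^ 2) + (p⁻¹ * k) ^ 2 + (k * q⁻¹) ^ 2 := by
  rcases hp.eq_or_lt with rfl | hp
  · simp [hkp rfl]
  rcases hq.eq_or_lt with rfl | hq
  · simp [hkq rfl]
  have hsos : 2 * (p * q * g ^ 2) + (p⁻¹ * k) ^ 2 + (k * q⁻¹) ^ 2 - 4 * (k * g) =
      2 * (p * q) * (g - p⁻¹ * k * q⁻¹) ^ 2 + (p⁻¹ * k - k * q⁻¹) ^ 2 := by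
    field_simp
    ring
  nlinarith [mul_nonneg (mul_pos hp hq).le (sq_nonneg (g - p⁻¹ * k * q⁻¹)),
    sq_nonneg (p⁻¹ * k - k * q⁻¹)]

variable {m n : ℕ} {A B : Matrix (Fin m) (Fin n) ℝ} {P Q : Matrix (Fin n) (Fin n) ℝ}

lemma four_mul_trace_transpose_mul_le (hP : P.PosSemidef) (hQ : Q.PosSemidef)
    (hPA : P * P = Aᵀ * A) (hQB : Q * Q = Bᵀ * B) :
    4 * trace (Aᵀ * B) ≤ frobNorm A ^ 2 + frobNorm B ^ 2 + 2 * trace (P * Q) := by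
  obtain ⟨hPh, hQh⟩ : P.IsHermitian ∧ Q.IsHermitian := ⟨hP.1, hQ.1⟩
  have ha := transpose_mul_self_mul_eigenvectorUnitary hPh hPA
  have hb := transpose_mul_self_mul_eigenvectorUnitary hQh hQB
  rw [trace_transpose_mul_eq_sum_rotated (eigenvectorUnitary_mul_transpose_self hPh)
    (eigenvectorUnitary_mul_transpose_self hQh), trace_mul_eq_sum_eigenvalues hPh hQh]
  rw [← frobNorm_mul_of_mul_transpose_eq_one A (eigenvectorUnitary_mul_transpose_self hPh),
    ← frobNorm_mul_of_mul_transpose_eq_one B (eigenvectorUnitary_mul_transpose_self hQh)]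
  set p := hPh.eigenvalues
  set q := hQh.eigenvalues
  set U := (hPh.eigenvectorUnitary : Matrix (Fin n) (Fin n) ℝ)
  set V := (hQh.eigenvectorUnitary : Matrix (Fin n) (Fin n) ℝ)
  set K := (A * U)ᵀ * (B * V) with hK
  set Γ := Uᵀ * V
  have hKt : ∀ i j, K i j = ((B * V)ᵀ * (A * U)) j i := fun i j => by
    rw [hK, ← transpose_apply (_ * _), transpose_mul, transpose_transpose]
  have hrow : ∑ i, ∑ j, ((p i)⁻¹ * K i j) ^ 2 ≤ frobNorm (B * V) ^ 2 :=
    sum_sq_inv_mul_transpose_mul_le ha (B * V)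
  have hcol : ∑ i, ∑ j, (K i j * (q j)⁻¹) ^ 2 ≤ frobNorm (A * U) ^ 2 := by
    rw [Finset.sum_comm]
    simpa only [hKt, mul_comm] using sum_sq_inv_mul_transpose_mul_le hb (A * U)
  have hterm : ∀ i j, 4 * (K i j * Γ i j) ≤
      2 * (p i * q j * Γ i j ^ 2) + ((p i)⁻¹ * K i j) ^ 2 + (K i j * (q j)⁻¹) ^ 2 :=
    fun i j => four_mul_le_two_mul_add_sq_add_sq (hP.eigenvalues_nonneg i) (hQ.eigenvalues_nonneg j)
      (fun h => transpose_mul_apply_eq_zero ha (by simp [h]) _ j)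
      (fun h => (hKt i j).trans (transpose_mul_apply_eq_zero hb (by simp [h]) _ i))
  calc 4 * ∑ i, ∑ j, K i j * Γ i j = ∑ i, ∑ j, 4 * (K i j * Γ i j) := by
        simp only [Finset.mul_sum]
    _ ≤ ∑ i, ∑ j,
          (2 * (p i * q j * Γ i j ^ 2) + ((p i)⁻¹ * K i j) ^ 2 + (K i j * (q j)⁻¹) ^ 2) :=
        Finset.sum_le_sum fun i _ => Finset.sum_le_sum fun j _ => hterm i j
    _ ≤ _ := by
        simp only [Finset.sum_add_distrib, ← Finset.mul_sum] at hrow hcol ⊢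
        linarith

theorem frobNorm_sub_le_sqrt_two_mul (hP : P.PosSemidef) (hQ : Q.PosSemidef)
    (hPA : P * P = Aᵀ * A) (hQB : Q * Q = Bᵀ * B) :
    frobNorm (P - Q) ≤ √2 * frobNorm (A - B) := by
  have hPt : Pᵀ = P := (conjTranspose_eq_transpose_of_trivial P).symm.trans hP.1
  have hQt : Qᵀ = Q := (conjTranspose_eq_transpose_of_trivial Q).symm.trans hQ.1
  have hPQ := four_mul_trace_transpose_mul_le hP hQ hPA hQB
  refine le_of_sq_le_sq ?_ (mul_nonneg (Real.sqrt_nonneg 2) (frobNorm_nonneg _))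
  rw [mul_pow, Real.sq_sqrt zero_le_two, frobNorm_sub_sq, frobNorm_sub_sq, frobNorm_sq P,
    frobNorm_sq Q, hPt, hQt, hPA, hQB, ← frobNorm_sq, ← frobNorm_sq]
  linarith

end ArakiYamagami

lemma List.getD_zero_le_of_mem {α : Type*} [Preorder α] {l : List α}
    (hl : l.Pairwise (· ≤ ·)) {x : α} (hx : x ∈ l) (d : α) : l.getD 0 d ≤ x := by
  cases l with
  | nil => simp at hx
  | cons a t =>
    rcases List.mem_cons.mp hx with rfl | hx
    · exact le_rfl
    · exact List.rel_of_pairwise_cons hl hx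

lemma singVal_le_sqrt_eigenvalues {L M : ℕ} (X : Matrix (Fin L) (Fin M) ℝ) (i : Fin M) :
    singVal X M ≤ √((isHermitian_transpose_mul_self X).eigenvalues i) := by
  rw [singVal, Nat.sub_self]
  refine List.getD_zero_le_of_mem (Multiset.pairwise_sort _ _) ?_ 0
  rw [Multiset.mem_sort]
  exact Multiset.mem_map_of_mem _ (Finset.mem_univ_val i)

section Perturbation

variable {m n : ℕ}

lemma frobNorm_matSqrt_sub_le (A B : Matrix (Fin m) (Fin n) ℝ) :
    frobNorm (matSqrt (Aᵀ * A) - matSqrt (Bᵀ * B)) ≤ √2 * frobNorm (A - B) :=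
  have hA := posSemidef_transpose_mul_self A
  have hB := posSemidef_transpose_mul_self B
  frobNorm_sub_le_sqrt_two_mul hA.posSemidef_matSqrt hB.posSemidef_matSqrt
    hA.matSqrt_mul_self hB.matSqrt_mul_self

lemma transpose_matSqrt_transpose_mul_self (A : Matrix (Fin m) (Fin n) ℝ) :
    (matSqrt (Aᵀ * A))ᵀ = matSqrt (Aᵀ * A) :=
  (conjTranspose_eq_transpose_of_trivial _).symm.trans
    (posSemidef_transpose_mul_self A).posSemidef_matSqrt.1

lemma mul_norm_le_norm_toEuclideanLin_matSqrt {A : Matrix (Fin m) (Fin n) ℝ} {c : ℝ}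
    (h : ∀ v, c * ‖v‖ ≤ ‖toEuclideanLin A v‖) (v : EuclideanSpace ℝ (Fin n)) :
    c * ‖v‖ ≤ ‖toEuclideanLin (matSqrt (Aᵀ * A)) v‖ := by
  rw [norm_toEuclideanLin_eq_of_mul_self_eq (transpose_matSqrt_transpose_mul_self A)
    (posSemidef_transpose_mul_self A).matSqrt_mul_self]
  exact h v

lemma specNorm_mul_inv_matSqrt_le_one (A : Matrix (Fin m) (Fin n) ℝ)
    (hdet : IsUnit (matSqrt (Aᵀ * A)).det) : specNorm (A * (matSqrt (Aᵀ * A))⁻¹) ≤ 1 :=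
  specNorm_mul_inv_le_one (transpose_matSqrt_transpose_mul_self A)
    (posSemidef_transpose_mul_self A).matSqrt_mul_self hdet

lemma frobNorm_add_mul_mul_le {l : ℕ} (Y : Matrix (Fin m) (Fin n) ℝ)
    (Q : Matrix (Fin m) (Fin l) ℝ) (D : Matrix (Fin l) (Fin n) ℝ)
    (W : Matrix (Fin n) (Fin n) ℝ) :
    frobNorm ((Y + Q * D) * W) ≤ (frobNorm Y + specNorm Q * frobNorm D) * specNorm W :=
  (frobNorm_mul_le_mul_specNorm _ _).trans <| mul_le_mul_of_nonneg_right
    ((frobNorm_add_le _ _).trans (add_le_add_right (frobNorm_mul_le_specNorm_mul _ _) _))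
    (specNorm_nonneg W)

lemma sub_mul_norm_le_norm_toEuclideanLin_add {X : Matrix (Fin m) (Fin n) ℝ} {c : ℝ}
    (h : ∀ v, c * ‖v‖ ≤ ‖toEuclideanLin X v‖) (Y : Matrix (Fin m) (Fin n) ℝ)
    (v : EuclideanSpace ℝ (Fin n)) :
    (c - specNorm Y) * ‖v‖ ≤ ‖toEuclideanLin (X + Y) v‖ := by
  rw [map_add, LinearMap.add_apply]
  have hY := norm_toEuclideanLin_le Y v
  have hXY := norm_sub_norm_le (toEuclideanLin X v) (-toEuclideanLin Y v)
  rw [norm_neg, sub_neg_eq_add] at hXY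
  linarith [h v]

lemma add_mul_inv_sub_mul_inv {R l k : Type*} [CommRing R] [Fintype k] [DecidableEq k]
    (X Y : Matrix l k R) {S T : Matrix k k R} (hS : IsUnit S.det) (hT : IsUnit T.det) :
    (X + Y) * T⁻¹ - X * S⁻¹ = (Y + X * S⁻¹ * (S - T)) * T⁻¹ := by
  rw [Matrix.mul_sub, Matrix.mul_assoc X S⁻¹ S, nonsing_inv_mul S hS, Matrix.mul_one]
  simp only [Matrix.add_mul, Matrix.sub_mul]
  rw [Matrix.mul_assoc (X * S⁻¹) T, mul_nonsing_inv T hT, Matrix.mul_one]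
  abel

end Perturbation

theorem stmt11_general {L M : ℕ} (X Y : Matrix (Fin L) (Fin M) ℝ)
    (h : specNorm Y < singVal X M) :
    IsUnit (Xᵀ * X) ∧ IsUnit ((X + Y)ᵀ * (X + Y)) ∧
      frobNorm (Pio (X + Y) - Pio X) ≤
        (1 + Real.sqrt 2) * frobNorm Y / (singVal X M - specNorm Y) := by
  have hσε : 0 < singVal X M - specNorm Y := sub_pos.mpr h
  have hσ : 0 < singVal X M := (specNorm_nonneg Y).trans_lt h
  have hX := mul_norm_le_norm_toEuclideanLin hσ.le (singVal_le_sqrt_eigenvalues X)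
  have hXY := sub_mul_norm_le_norm_toEuclideanLin_add hX Y
  refine ⟨isUnit_transpose_mul_self_of_mul_norm_le hσ hX,
    isUnit_transpose_mul_self_of_mul_norm_le hσε hXY, ?_⟩
  have hS := isUnit_det_of_mul_norm_le hσ (mul_norm_le_norm_toEuclideanLin_matSqrt hX)
  have hT := mul_norm_le_norm_toEuclideanLin_matSqrt hXY
  have hST := frobNorm_matSqrt_sub_le X (X + Y)
  rw [sub_add_cancel_left, frobNorm_neg] at hST
  rw [Pio, Pio, add_mul_inv_sub_mul_inv X Y hS (isUnit_det_of_mul_norm_le hσε hT)]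
  calc _ ≤ _ := frobNorm_add_mul_mul_le _ _ _ _
    _ ≤ (frobNorm Y + 1 * (√2 * frobNorm Y)) * (singVal X M - specNorm Y)⁻¹ := by
        have := frobNorm_nonneg Y
        gcongr
        · exact specNorm_nonneg _
        · exact frobNorm_nonneg _
        · exact specNorm_mul_inv_matSqrt_le_one X hS
        · exact specNorm_inv_le_of_mul_norm_le hσε hT
    _ = (1 + √2) * frobNorm Y / (singVal X M - specNorm Y) := by ring

/-- Perturbation bound for `Πₒ` under an additive perturbation that is
smaller than the smallest singular value. -/
theorem stmt11 {L M : ℕ} (hLM : M ≤ L) (X Y : Matrix (Fin L) (Fin M) ℝ)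
    (h : specNorm Y < singVal X M) :
    IsUnit (Xᵀ * X) ∧ IsUnit ((X + Y)ᵀ * (X + Y)) ∧
      frobNorm (Pio (X + Y) - Pio X) ≤
        (1 + Real.sqrt 2) * frobNorm Y / (singVal X M - specNorm Y) :=
  stmt11_general X Y h
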